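/- Let S ∈ ℝ^{m×m}, B ∈ ℝ^{m×p}, a > 0, κ > 0, and let P ∈ ℝ^{m×m} be a symmetric positive definite matrix satisfying the algebraic Riccati equation SᵀP + PS − 2κPBBᵀP + aI = 0. Then for every λ ∈ ℂ with Re λ ≥ κ, the complex matrix S − λBBᵀP (where S, B, P are taken entrywise as complex matrices) is Hurwitz. -/

import Mathlib

/-!
Complexify and run Lyapunov's argument. With `K = BBᵀP` the matrix `PK = PBBᵀP` is symmetric, so
for `M = S - λK` the Riccati equation gives
`MᴴP + PM = SᵀP + PS - 2 Re λ · PBBᵀP = -(a I + 2 (Re λ - κ) PBBᵀP)`,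
which is negative definite once `Re λ ≥ κ`. If `Mv = μv` with `v ≠ 0`, then
`2 Re μ · v*Pv = v*(MᴴP + PM)v < 0` and `v*Pv > 0`, so `Re μ < 0`.
-/

open Matrix
open scoped ComplexOrder MatrixOrder

def IsHurwitzC {n : Type*} [Fintype n] [DecidableEq n] (M : Matrix n n ℂ) : Prop :=
  ∀ μ : ℂ, M.charpoly.IsRoot μ → μ.re < 0

namespace Matrix

variable {n : Type*} [Fintype n] [DecidableEq n]

theorem exists_mulVec_eq_smul_of_isRoot_charpoly {K : Type*} [Field K] {M : Matrix n n K}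
    {μ : K} (h : M.charpoly.IsRoot μ) : ∃ v ≠ 0, M *ᵥ v = μ • v := by
  rw [← charpoly_toLin', ← Module.End.hasEigenvalue_iff_isRoot_charpoly] at h
  obtain ⟨v, hv⟩ := h.exists_hasEigenvector
  exact ⟨v, hv.2, by simpa using hv.apply_eq_smul⟩

theorem PosSemidef.map_ofReal {A : Matrix n n ℝ} (hA : A.PosSemidef) :
    (A.map Complex.ofReal).PosSemidef := by
  obtain ⟨X, rfl⟩ := CStarAlgebra.nonneg_iff_eq_star_mul_self.mp hA.nonneg
  convert posSemidef_conjTranspose_mul_self (X.map Complex.ofReal) using 1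
  ext i j
  simp [mul_apply]

theorem PosDef.map_ofReal {A : Matrix n n ℝ} (hA : A.PosDef) :
    (A.map Complex.ofReal).PosDef := by
  have hdet : (A.map Complex.ofReal).det = A.det := (Complex.ofRealHom.map_det A).symm
  rw [hA.posSemidef.map_ofReal.posDef_iff_det_ne_zero, hdet]
  exact Complex.ofReal_ne_zero.mpr hA.det_pos.ne'

theorem conjTranspose_mul_add_mul_map_ofReal_sub_smul (S K P : Matrix n n ℝ)
    (hKP : Kᵀ * P = P * K) (lam : ℂ) :
    (S.map Complex.ofReal - lam • K.map Complex.ofReal)ᴴ * P.map Complex.ofReal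
        + P.map Complex.ofReal * (S.map Complex.ofReal - lam • K.map Complex.ofReal)
      = (Sᵀ * P + P * S - (2 * lam.re) • (P * K)).map Complex.ofReal := by
  have hmap_mul (X Y : Matrix n n ℝ) :
      (X * Y).map Complex.ofReal = X.map Complex.ofReal * Y.map Complex.ofReal :=
    Matrix.map_mul (f := Complex.ofRealHom)
  have hmap_conjTranspose (X : Matrix n n ℝ) :
      (X.map Complex.ofReal)ᴴ = Xᵀ.map Complex.ofReal := by
    ext; simp
  simp only [conjTranspose_sub, conjTranspose_smul, hmap_conjTranspose, sub_mul, mul_sub,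
    smul_mul_assoc, mul_smul_comm, ← hmap_mul, hKP]
  rw [Matrix.map_sub _ (by simp), Matrix.map_add _ (by simp), Matrix.map_smul' _ _ _ (by simp),
    ← Complex.add_conj, ← Complex.star_def]
  simp only [hmap_mul]
  module

end Matrix

theorem IsHurwitzC.of_posDef_lyapunov {n : Type*} [Fintype n] [DecidableEq n]
    {M P : Matrix n n ℂ} (hP : P.PosDef) (hMP : (-(Mᴴ * P + P * M)).PosDef) : IsHurwitzC M := by
  intro μ hμ
  obtain ⟨v, hv, hMv⟩ := exists_mulVec_eq_smul_of_isRoot_charpoly hμ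
  have hquad : star v ⬝ᵥ (-(Mᴴ * P + P * M)) *ᵥ v
      = -((2 * μ.re : ℝ) * (star v ⬝ᵥ P *ᵥ v)) := by
    have hstar : star v ⬝ᵥ (Mᴴ *ᵥ P *ᵥ v) = star μ * (star v ⬝ᵥ P *ᵥ v) := by
      rw [dotProduct_mulVec, vecMul_conjTranspose, star_star, hMv, star_smul, smul_dotProduct,
        dotProduct_mulVec, smul_eq_mul]
    rw [← Complex.add_conj, add_mul, add_comm]
    simp only [neg_mulVec, add_mulVec, ← mulVec_mulVec, dotProduct_neg, dotProduct_add, hstar,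
      hMv, mulVec_smul, dotProduct_smul, smul_eq_mul]
    rfl
  have hneg := hMP.dotProduct_mulVec_pos hv
  have hpos := hP.dotProduct_mulVec_pos hv
  rw [hquad] at hneg
  rw [Complex.lt_def] at hneg hpos
  simp only [Complex.zero_re, Complex.neg_re, Complex.re_ofReal_mul] at hneg hpos
  nlinarith

theorem riccati_shifted_hurwitz_general
    (m p : ℕ)
    (S : Matrix (Fin m) (Fin m) ℝ) (B : Matrix (Fin m) (Fin p) ℝ)
    (a κ : ℝ) (ha : 0 < a)
    (P : Matrix (Fin m) (Fin m) ℝ) (hP : P.PosDef)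
    (hriccati : Sᵀ * P + P * S - (2 * κ) • (P * B * Bᵀ * P)
        + a • (1 : Matrix (Fin m) (Fin m) ℝ) = 0) :
    ∀ lam : ℂ, κ ≤ lam.re →
      IsHurwitzC (S.map Complex.ofReal - lam • ((B * Bᵀ * P).map Complex.ofReal)) := by
  intro lam hlam
  have hPT : Pᵀ = P := hP.isHermitian.eq
  have hQ : (P * B * Bᵀ * P).PosSemidef := by
    simpa [Matrix.mul_assoc, hPT] using posSemidef_conjTranspose_mul_self (Bᵀ * P)
  have hKP : (B * Bᵀ * P)ᵀ * P = P * (B * Bᵀ * P) := by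
    simp [Matrix.mul_assoc, hPT]
  have hlyap : a • 1 + (2 * lam.re - 2 * κ) • (P * B * Bᵀ * P)
      = -(Sᵀ * P + P * S - (2 * lam.re) • (P * (B * Bᵀ * P))) := by
    rw [← sub_eq_zero, ← hriccati]
    simp only [Matrix.mul_assoc]
    module
  refine IsHurwitzC.of_posDef_lyapunov hP.map_ofReal ?_
  rw [conjTranspose_mul_add_mul_map_ofReal_sub_smul _ _ _ hKP, ← Matrix.map_neg _ (by simp),
    ← hlyap]
  exact ((PosDef.one.smul ha).add_posSemidef (hQ.smul (by linarith))).map_ofReal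

/-- if `P ≻ 0` solves the ARE `SᵀP + PS − 2κPBBᵀP + aI = 0`, then for every
`λ ∈ ℂ` with `Re λ ≥ κ` the matrix `S − λBBᵀP` is Hurwitz. -/
theorem riccati_shifted_hurwitz
    (m p : ℕ)
    (S : Matrix (Fin m) (Fin m) ℝ) (B : Matrix (Fin m) (Fin p) ℝ)
    (a κ : ℝ) (ha : 0 < a) (hκ : 0 < κ)
    (P : Matrix (Fin m) (Fin m) ℝ) (hP : P.PosDef)
    (hriccati : Sᵀ * P + P * S - (2 * κ) • (P * B * Bᵀ * P)
        + a • (1 : Matrix (Fin m) (Fin m) ℝ) = 0) :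
    ∀ lam : ℂ, κ ≤ lam.re →
      IsHurwitzC (S.map Complex.ofReal - lam • ((B * Bᵀ * P).map Complex.ofReal)) :=
  riccati_shifted_hurwitz_general m p S B a κ ha P hP hriccati
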